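/- For every n, the multigraph M₂(n) on n vertices in which all pairs have multiplicity 3 except that the pairs of a maximum-size matching (of size ⌊n/2⌋) have multiplicity 4, satisfies w(xy) ≤ 4 for every pair, w(xy)+w(xz)+w(yz) ≤ 10 for every triple of distinct vertices, and e(M₂(n)) = m(n). -/
import Mathlib


/-- `m n = 3n²/2 - n` for `n` even, `(3n²-1)/2 - n` for `n` odd. -/
def m (n : ℕ) : ℕ := if Even n then 3 * n ^ 2 / 2 - n else (3 * n ^ 2 - 1) / 2 - n

/-- The multigraph `M₂(n)` on `Fin n`: all pairs of distinct vertices have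
multiplicity 3, except the `⌊n/2⌋` pairs `{2k, 2k+1}` of a maximum-size matching,
which have multiplicity 4. (Two distinct vertices `x,y` satisfy `⌊x/2⌋ = ⌊y/2⌋`
exactly when `{x,y} = {2k, 2k+1}` for some `k`.) -/
def M2 (n : ℕ) : Sym2 (Fin n) → ℕ :=
  Sym2.lift ⟨fun x y =>
      if x = y then 0 else if (x : ℕ) / 2 = (y : ℕ) / 2 then 4 else 3,
    fun x y => by simp only [eq_comm]⟩

lemma card_filter_half (m : ℕ) :
    ((Finset.range m).filter fun v => v / 2 = m / 2).card = m % 2 := by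
  rcases Nat.even_or_odd m with h | h
  · rw [Nat.even_iff] at h
    rw [Finset.filter_eq_empty_iff.2 (fun v hv => by
      simp only [Finset.mem_range] at hv; omega)]
    simp [h]
  · rw [Nat.odd_iff] at h
    have : (Finset.range m).filter (fun v => v / 2 = m / 2) = {m - 1} := by
      ext v; simp only [Finset.mem_filter, Finset.mem_range, Finset.mem_singleton]; omega
    rw [this]; simp [h]

lemma nat_inner (k : ℕ) :
    ∑ v ∈ Finset.range k, (if v / 2 = k / 2 then 4 else 3) = 3 * k + k % 2 := by
  have : ∀ v, (if v / 2 = k / 2 then 4 else 3) = 3 + (if v / 2 = k / 2 then 1 else 0) := by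
    intro v; split_ifs <;> rfl
  simp_rw [this]
  rw [Finset.sum_add_distrib, Finset.sum_const, Finset.card_range, Finset.sum_boole,
    card_filter_half]
  push_cast
  ring

lemma m_two_mul (t : ℕ) : m (2 * t) = 6 * t ^ 2 - 2 * t := by
  have h : (2 * t) ^ 2 = 4 * t ^ 2 := by ring
  rw [m, if_pos ⟨t, by ring⟩, h]
  omega

lemma m_odd (t : ℕ) : m (2 * t + 1) = 6 * t ^ 2 + 4 * t := by
  have h : (2 * t + 1) ^ 2 = 4 * t ^ 2 + 4 * t + 1 := by ring
  rw [m, if_neg (by simp [Nat.even_add_one, parity_simps]), h]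
  omega

lemma sum_m (n : ℕ) : ∑ y ∈ Finset.range n, (3 * y + y % 2) = m n := by
  induction n with
  | zero => simp [m]
  | succ k ih =>
    rw [Finset.sum_range_succ, ih]
    rcases Nat.even_or_odd k with h | h
    · obtain ⟨t, rfl⟩ := h
      have h2 : t + t = 2 * t := by ring
      rw [h2, m_two_mul, show 2 * t + 1 = 2 * t + 1 from rfl, m_odd]
      have ht : t ≤ t ^ 2 := Nat.le_self_pow (by norm_num) t
      omega
    · obtain ⟨t, rfl⟩ := h
      rw [m_odd, show 2 * t + 1 + 1 = 2 * (t + 1) from by ring, m_two_mul]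
      have ht : t + 1 ≤ (t + 1) ^ 2 := Nat.le_self_pow (by norm_num) (t + 1)
      have hsq : (t + 1) ^ 2 = t ^ 2 + 2 * t + 1 := by ring
      omega

theorem M2_extremal (n : ℕ) :
    (∀ x y : Fin n, x ≠ y → M2 n s(x, y) ≤ 4) ∧
    (∀ x y z : Fin n, x ≠ y → x ≠ z → y ≠ z →
      M2 n s(x, y) + M2 n s(x, z) + M2 n s(y, z) ≤ 10) ∧
    ∑ p ∈ Finset.univ.filter (fun p : Sym2 (Fin n) => ¬ p.IsDiag), M2 n p = m n := by
  refine ⟨?_, ?_, ?_⟩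
  · intro x y hxy
    simp only [M2, Sym2.lift_mk]
    split_ifs <;> omega
  · intro x y z hxy hxz hyz
    have e1 : (x : ℕ) ≠ y := fun h => hxy (Fin.ext h)
    have e2 : (x : ℕ) ≠ z := fun h => hxz (Fin.ext h)
    have e3 : (y : ℕ) ≠ z := fun h => hyz (Fin.ext h)
    simp only [M2, Sym2.lift_mk, if_neg hxy, if_neg hxz, if_neg hyz]
    split_ifs <;> omega
  · have main : ∑ i ∈ (Finset.univ.offDiag.filter fun i : Fin n × Fin n => i.1 < i.2),
        M2 n s(i.1, i.2) = m n := by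
      have step1 : ∑ i ∈ (Finset.univ.offDiag.filter fun i : Fin n × Fin n => i.1 < i.2),
          M2 n s(i.1, i.2) = ∑ y : Fin n, ∑ x ∈ Finset.Iio y, M2 n s(x, y) := by
        rw [Finset.sum_sigma']
        refine Finset.sum_nbij' (fun i => ⟨i.2, i.1⟩) (fun p => (p.2, p.1)) ?_ ?_ ?_ ?_ ?_
        · intro i hi
          simp only [Finset.mem_filter, Finset.mem_offDiag] at hi
          simp [Finset.mem_sigma, Finset.mem_Iio, hi.2]
        · intro p hp
          simp only [Finset.mem_sigma, Finset.mem_Iio] at hp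
          simp only [Finset.mem_filter, Finset.mem_offDiag]
          exact ⟨⟨Finset.mem_univ _, Finset.mem_univ _, hp.2.ne⟩, hp.2⟩
        · exact fun i _ => rfl
        · exact fun p _ => rfl
        · exact fun i _ => rfl
      rw [step1]
      have inner : ∀ y : Fin n, ∑ x ∈ Finset.Iio y, M2 n s(x, y)
          = 3 * (y : ℕ) + (y : ℕ) % 2 := by
        intro y
        have h1 : ∑ x ∈ Finset.Iio y, M2 n s(x, y)
            = ∑ x ∈ Finset.Iio y, (if (x : ℕ) / 2 = (y : ℕ) / 2 then 4 else 3) := by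
          refine Finset.sum_congr rfl fun x hx => ?_
          have : x ≠ y := (Finset.mem_Iio.1 hx).ne
          simp [M2, this]
        have h2 := Finset.sum_map (Finset.Iio y) Fin.valEmbedding
          (fun v => if v / 2 = (y : ℕ) / 2 then 4 else 3)
        rw [Fin.map_valEmbedding_Iio] at h2
        simp only [Fin.valEmbedding_apply] at h2
        rw [h1, ← h2, Nat.Iio_eq_range, nat_inner]
      simp_rw [inner]
      rw [Fin.sum_univ_eq_sum_range (fun y => 3 * y + y % 2) n]
      exact sum_m n
    have key := Finset.sum_sym2_filter_not_isDiag (Finset.univ : Finset (Fin n)) (M2 n)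
    rw [Finset.sym2_univ] at key
    have key' : ∑ p ∈ Finset.univ.filter (fun p : Sym2 (Fin n) => ¬ p.IsDiag), M2 n p
        = ∑ i ∈ (Finset.univ.offDiag.filter fun i : Fin n × Fin n => i.1 < i.2),
            M2 n s(i.1, i.2) := by
      convert key using 2 <;> congr!
    exact key'.trans main
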